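/- Let s > 0, let P satisfy H1, and let 0 < x₀ ≤ x₁. If γ₁ and γ₂ are two positive solutions of the Dyson–Schwinger ODE on [x₀, x₁], then for every x ∈ [x₀, x₁]: γ₁(x) − γ₂(x) = (γ₁(x₀) − γ₂(x₀)) · exp( ∫_{x₀}^x [ 1/(s·z) + P(z)/(s·z·γ₁(z)·γ₂(z)) ] dz ). In particular, if γ₂(x₀) < γ₁(x₀) then γ₂(x) < γ₁(x) for all x ∈ [x₀, x₁]. -/

import Mathlib

open Real MeasureTheory Filter Set

noncomputable section

/-- `γ` is a positive solution of the Dyson–Schwinger ODE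
`γ'(x) = (γ(x) + γ(x)² − P(x)) / (s·x·γ(x))` on the set `I`. -/
def IsDSSolution (s : ℝ) (P γ : ℝ → ℝ) (I : Set ℝ) : Prop :=
  (∀ x ∈ I, 0 < γ x) ∧
    ∀ x ∈ I, HasDerivWithinAt γ ((γ x + (γ x) ^ 2 - P x) / (s * x * γ x)) I x

/-- Hypothesis H1: `P` is twice continuously differentiable on `[0,∞)`,
`P 0 = 0`, and `P x > 0` for `x > 0`. -/
def H1 (P : ℝ → ℝ) : Prop :=
  ContDiffOn ℝ 2 P (Set.Ici 0) ∧ P 0 = 0 ∧ ∀ x > (0 : ℝ), 0 < P x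

/-- Hypothesis H2: `P` is strictly increasing on `[0,∞)`. -/
def H2 (P : ℝ → ℝ) : Prop := StrictMonoOn P (Set.Ici 0)

/-- The nullcline `γ_c(x) = (√(1 + 4 P x) − 1)/2`. -/
def gammaC (P : ℝ → ℝ) (x : ℝ) : ℝ := (Real.sqrt (1 + 4 * P x) - 1) / 2

/-!
The difference `δ = γ₁ − γ₂` of two solutions solves the linear ODE `δ' = g δ` with
`g = 1/(s z) + P/(s z γ₁ γ₂)`, since `(γ + γ² − P)/γ = 1 + γ − P/γ`. So `δ · exp (−∫ g)` has
zero derivative, which gives the formula, and the exponential factor is positive.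
-/

open intervalIntegral

theorem hasDerivWithinAt_integral_Icc {g : ℝ → ℝ} {a b x : ℝ} (hg : ContinuousOn g (Icc a b))
    (hx : x ∈ Icc a b) :
    HasDerivWithinAt (fun u => ∫ z in a..u, g z) (g x) (Icc a b) x := by
  have := Fact.mk hx
  refine integral_hasDerivWithinAt_right ?_
    (hg.stronglyMeasurableAtFilter_nhdsWithin measurableSet_Icc x) (hg x hx)
  exact (hg.mono (Icc_subset_Icc le_rfl hx.2)).intervalIntegrable_of_Icc hx.1

theorem eq_mul_exp_integral_of_hasDerivWithinAt {δ g : ℝ → ℝ} {a b : ℝ}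
    (hg : ContinuousOn g (Icc a b))
    (hδ : ∀ x ∈ Icc a b, HasDerivWithinAt δ (g x * δ x) (Icc a b) x) :
    ∀ x ∈ Icc a b, δ x = δ a * exp (∫ z in a..x, g z) := by
  intro x hx
  set G : ℝ → ℝ := fun u => ∫ z in a..u, g z
  have hderiv : ∀ y ∈ Icc a b,
      HasDerivWithinAt (fun u => δ u * exp (-G u)) 0 (Icc a b) y := by
    intro y hy
    refine ((hδ y hy).mul (hasDerivWithinAt_integral_Icc hg hy).neg.exp).congr_deriv ?_
    ring
  have hconst : δ x * exp (-G x) = δ a * exp (-G a) := by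
    simpa [sub_eq_zero] using (convex_Icc a b).norm_image_sub_le_of_norm_hasDerivWithin_le
      hderiv (fun _ _ => norm_zero.le) (left_mem_Icc.2 (hx.1.trans hx.2)) hx
  have hGa : G a = 0 := integral_same
  rw [hGa, neg_zero, exp_zero, mul_one] at hconst
  rw [← hconst, mul_assoc, ← exp_add, neg_add_cancel, exp_zero, mul_one]

theorem ds_rhs_sub_ds_rhs (s p x u v : ℝ) (hu : u ≠ 0) (hv : v ≠ 0) :
    (u + u ^ 2 - p) / (s * x * u) - (v + v ^ 2 - p) / (s * x * v) =
      (1 / (s * x) + p / (s * x * u * v)) * (u - v) := by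
  rcases eq_or_ne (s * x) 0 with hsx | hsx
  · simp [hsx]
  · obtain ⟨hs, hx⟩ := mul_ne_zero_iff.1 hsx
    field_simp
    ring

def dsKernel (s : ℝ) (P γ₁ γ₂ : ℝ → ℝ) (z : ℝ) : ℝ :=
  1 / (s * z) + P z / (s * z * γ₁ z * γ₂ z)

namespace IsDSSolution

variable {s : ℝ} {P γ γ₁ γ₂ : ℝ → ℝ} {I : Set ℝ}

theorem continuousOn (h : IsDSSolution s P γ I) : ContinuousOn γ I :=
  fun x hx => (h.2 x hx).continuousWithinAt

theorem hasDerivWithinAt_sub (h₁ : IsDSSolution s P γ₁ I) (h₂ : IsDSSolution s P γ₂ I) :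
    ∀ x ∈ I, HasDerivWithinAt (fun y => γ₁ y - γ₂ y)
      (dsKernel s P γ₁ γ₂ x * (γ₁ x - γ₂ x)) I x := fun x hx =>
  ((h₁.2 x hx).sub (h₂.2 x hx)).congr_deriv
    (ds_rhs_sub_ds_rhs s (P x) x _ _ (h₁.1 x hx).ne' (h₂.1 x hx).ne')

theorem continuousOn_dsKernel (hI : ∀ z ∈ I, z ≠ 0) (hP : ContinuousOn P I)
    (h₁ : IsDSSolution s P γ₁ I) (h₂ : IsDSSolution s P γ₂ I) :
    ContinuousOn (dsKernel s P γ₁ γ₂) I := by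
  rcases eq_or_ne s 0 with rfl | hs
  · unfold dsKernel
    simp [continuousOn_const]
  have hsz : ∀ z ∈ I, s * z ≠ 0 := fun z hz => mul_ne_zero hs (hI z hz)
  refine (continuousOn_const.div (continuousOn_const.mul continuousOn_id) hsz).add
    (hP.div (((continuousOn_const.mul continuousOn_id).mul h₁.continuousOn).mul h₂.continuousOn)
      fun z hz => ?_)
  exact mul_ne_zero (mul_ne_zero (hsz z hz) (h₁.1 z hz).ne') (h₂.1 z hz).ne'

end IsDSSolution

theorem stmt_3_general (s : ℝ) (P : ℝ → ℝ) (hP : H1 P) (x₀ x₁ : ℝ)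
    (hx₀ : 0 < x₀) (γ₁ γ₂ : ℝ → ℝ)
    (hγ₁ : IsDSSolution s P γ₁ (Set.Icc x₀ x₁))
    (hγ₂ : IsDSSolution s P γ₂ (Set.Icc x₀ x₁)) :
    (∀ x ∈ Set.Icc x₀ x₁,
      γ₁ x - γ₂ x = (γ₁ x₀ - γ₂ x₀) *
        Real.exp (∫ z in x₀..x, 1 / (s * z) + P z / (s * z * γ₁ z * γ₂ z))) ∧
    (γ₂ x₀ < γ₁ x₀ → ∀ x ∈ Set.Icc x₀ x₁, γ₂ x < γ₁ x) := by
  have hpos : ∀ z ∈ Icc x₀ x₁, 0 < z := fun z hz => hx₀.trans_le hz.1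
  have hPc : ContinuousOn P (Icc x₀ x₁) :=
    hP.1.continuousOn.mono fun z hz => (hpos z hz).le
  have hformula := eq_mul_exp_integral_of_hasDerivWithinAt
    (hγ₁.continuousOn_dsKernel (fun z hz => (hpos z hz).ne') hPc hγ₂)
    (hγ₁.hasDerivWithinAt_sub hγ₂)
  refine ⟨hformula, fun hlt x hx => ?_⟩
  have := mul_pos (sub_pos.2 hlt) (exp_pos (∫ z in x₀..x, dsKernel s P γ₁ γ₂ z))
  linarith [hformula x hx]

theorem stmt_3 (s : ℝ) (hs : 0 < s) (P : ℝ → ℝ) (hP : H1 P) (x₀ x₁ : ℝ)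
    (hx₀ : 0 < x₀) (hx₀₁ : x₀ ≤ x₁) (γ₁ γ₂ : ℝ → ℝ)
    (hγ₁ : IsDSSolution s P γ₁ (Set.Icc x₀ x₁))
    (hγ₂ : IsDSSolution s P γ₂ (Set.Icc x₀ x₁)) :
    (∀ x ∈ Set.Icc x₀ x₁,
      γ₁ x - γ₂ x = (γ₁ x₀ - γ₂ x₀) *
        Real.exp (∫ z in x₀..x, 1 / (s * z) + P z / (s * z * γ₁ z * γ₂ z))) ∧
    (γ₂ x₀ < γ₁ x₀ → ∀ x ∈ Set.Icc x₀ x₁, γ₂ x < γ₁ x) :=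
  stmt_3_general s P hP x₀ x₁ hx₀ γ₁ γ₂ hγ₁ hγ₂
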